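/- arXiv:2209.00567 — 3 statements merged into one kernel-verified Lean document; each statement's English description precedes it below -/
import Mathlib

section
/- Let B₁ ≠ B₂ ∈ ℂ, let P₀, P₁, P₂ ∈ ℂ be non-collinear, and let P₃ ∈ ℂ with P₃ ≠ B₁. Then the set of direct isometries g of the plane satisfying |g(P k) − B₁| = |P k − B₁| for k = 0, 1, 2 and |g(P₃) − B₂| = |P₃ − B₂| has at most two elements. -/
/-!
A direct isometry `z ↦ a z + b` preserves distances, so the three measurements from `B₁` say
that `P₀, P₁, P₂` are equidistant from `B₁` and from the preimage of `B₁`; three non-collinear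
points span the plane, so the preimage is `B₁` itself and the isometry is a rotation about `B₁`.
Such a rotation is determined by the image of `P₃ ≠ B₁`, which lies on the circle about `B₁`
through `P₃` and, by the last measurement, on the circle about `B₂` through `P₃`; two circles
with distinct centres meet in at most two points.
-/
open EuclideanGeometry Module AffineSubspace

section
variable {V P : Type*} [NormedAddCommGroup V] [InnerProductSpace ℝ V] [MetricSpace P]
  [NormedAddTorsor V P]

theorem eq_of_forall_dist_eq_of_affineSpan_eq_top {s : Set P} (hs : affineSpan ℝ s = ⊤)
    {x y : P} (h : ∀ p ∈ s, dist p x = dist p y) : x = y := by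
  rw [← perpBisector_eq_top, eq_top_iff, ← hs, affineSpan_le]
  exact fun p hp => mem_perpBisector_iff_dist_eq.mpr (h p hp)

variable [FiniteDimensional ℝ V]

theorem affineSpan_eq_top_of_not_collinear (hd : finrank ℝ V = 2) {p₁ p₂ p₃ : P}
    (h : ¬Collinear ℝ {p₁, p₂, p₃}) : affineSpan ℝ {p₁, p₂, p₃} = ⊤ := by
  have hspan :=
    (affineIndependent_iff_not_collinear_set.mpr h).affineSpan_eq_top_iff_card_eq_finrank_add_one
  rw [Matrix.range_cons, Matrix.range_cons, Matrix.range_cons_empty, Fintype.card_fin, hd,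
    Set.singleton_union, Set.singleton_union] at hspan
  exact hspan.mpr rfl

theorem exists_forall_eq_or_eq_of_dist_eq_of_dist_eq (hd : finrank ℝ V = 2) {c₁ c₂ : P}
    (hc : c₁ ≠ c₂) (r₁ r₂ : ℝ) :
    ∃ p₁ p₂ : P, ∀ p, dist p c₁ = r₁ → dist p c₂ = r₂ → p = p₁ ∨ p = p₂ := by
  set s := {p : P | dist p c₁ = r₁ ∧ dist p c₂ = r₂}
  rcases s.subsingleton_or_nontrivial with hs | ⟨p₁, ⟨h₁₁, h₁₂⟩, p₂, ⟨h₂₁, h₂₂⟩, hp⟩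
  · rcases hs.eq_empty_or_singleton with hs | ⟨p₁, hs⟩
    · exact ⟨c₁, c₁, fun p h₁ h₂ => (Set.eq_empty_iff_forall_notMem.mp hs p ⟨h₁, h₂⟩).elim⟩
    · exact ⟨p₁, p₁, fun p h₁ h₂ => Or.inl (hs ▸ ⟨h₁, h₂⟩ : p ∈ ({p₁} : Set P))⟩
  · exact ⟨p₁, p₂, fun p h₁ h₂ =>
      eq_of_dist_eq_of_dist_eq_of_finrank_eq_two hd hc hp h₁₁ h₂₁ h₁ h₁₂ h₂₂ h₂⟩

end

namespace Complex

def rotationAbout (c a z : ℂ) : ℂ := a * (z - c) + c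

theorem norm_rotationAbout_sub {a : ℂ} (ha : ‖a‖ = 1) (c z : ℂ) :
    ‖rotationAbout c a z - c‖ = ‖z - c‖ := by
  simp [rotationAbout, ha]

theorem rotationAbout_eq_of_ne {c p : ℂ} (hp : p ≠ c) (a : ℂ) :
    rotationAbout c a = rotationAbout c ((rotationAbout c a p - c) / (p - c)) := by
  have : p - c ≠ 0 := sub_ne_zero.mpr hp
  simp [rotationAbout, this]

theorem norm_mul_add_sub {a : ℂ} (ha : ‖a‖ = 1) (z b w : ℂ) :
    ‖a * z + b - w‖ = ‖z - a⁻¹ * (w - b)‖ := by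
  have ha₀ : a ≠ 0 := norm_ne_zero_iff.mp (ha ▸ one_ne_zero)
  rw [show a * z + b - w = a * (z - a⁻¹ * (w - b)) by field_simp; ring, norm_mul, ha, one_mul]

theorem mul_add_eq_rotationAbout {a b c p₁ p₂ p₃ : ℂ} (ha : ‖a‖ = 1)
    (hp : ¬Collinear ℝ {p₁, p₂, p₃}) (h₁ : ‖a * p₁ + b - c‖ = ‖p₁ - c‖)
    (h₂ : ‖a * p₂ + b - c‖ = ‖p₂ - c‖) (h₃ : ‖a * p₃ + b - c‖ = ‖p₃ - c‖) :
    (fun z => a * z + b) = rotationAbout c a := by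
  have hfix : a⁻¹ * (c - b) = c := by
    refine eq_of_forall_dist_eq_of_affineSpan_eq_top
      (affineSpan_eq_top_of_not_collinear finrank_real_complex hp) ?_
    simp only [Set.mem_insert_iff, Set.mem_singleton_iff, dist_eq]
    rintro p (rfl | rfl | rfl) <;> rwa [← norm_mul_add_sub ha]
  have ha₀ : a ≠ 0 := norm_ne_zero_iff.mp (ha ▸ one_ne_zero)
  rw [inv_mul_eq_iff_eq_mul₀ ha₀] at hfix
  funext z
  simp only [rotationAbout]
  linear_combination -hfix

end Complex

open Complex in
/-- Generic 3+1 case: with three non-collinear points sensed by `B₁` and a fourth point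
sensed by `B₂`, at most two direct isometries are compatible with all measurements. -/
theorem generic_three_plus_one_at_most_two (B1 B2 : ℂ) (hB : B1 ≠ B2)
    (P0 P1 P2 : ℂ) (hnc : ¬ Collinear ℝ ({P0, P1, P2} : Set ℂ))
    (P3 : ℂ) (hP3 : P3 ≠ B1) :
    ∃ g1 g2 : ℂ → ℂ,
      ∀ g ∈ {g : ℂ → ℂ | (∃ a b : ℂ, ‖a‖ = 1 ∧ g = fun z => a * z + b) ∧
        ‖g P0 - B1‖ = ‖P0 - B1‖ ∧
        ‖g P1 - B1‖ = ‖P1 - B1‖ ∧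
        ‖g P2 - B1‖ = ‖P2 - B1‖ ∧
        ‖g P3 - B2‖ = ‖P3 - B2‖},
      g = g1 ∨ g = g2 := by
  obtain ⟨w₁, w₂, hw⟩ := exists_forall_eq_or_eq_of_dist_eq_of_dist_eq finrank_real_complex hB
    ‖P3 - B1‖ ‖P3 - B2‖
  let rotationTo (w : ℂ) := rotationAbout B1 ((w - B1) / (P3 - B1))
  refine ⟨rotationTo w₁, rotationTo w₂, ?_⟩
  rintro g ⟨⟨a, b, ha, rfl⟩, h₀, h₁, h₂, h₃⟩
  rw [mul_add_eq_rotationAbout ha hnc h₀ h₁ h₂] at h₃ ⊢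
  rw [rotationAbout_eq_of_ne hP3 a]
  rcases hw _ (by rw [dist_eq, norm_rotationAbout_sub ha]) (by rwa [dist_eq]) with h | h
  · exact Or.inl (by rw [h])
  · exact Or.inr (by rw [h])
end

section
/- Let B₁ ≠ B₂ ∈ ℂ, let P₀, P₁, P₂ ∈ ℂ be non-collinear, and let P₃, P₄ ∈ ℂ be such that B₁, P₃, P₄ are non-collinear. If g is a direct isometry of the plane with |g(P k) − B₁| = |P k − B₁| for k = 0, 1, 2 and |g(P k) − B₂| = |P k − B₂| for k = 3, 4, then g = id. -/
/-!
If `|g P - B| = |P - B|` and `g B' = B`, then `|P - B| = |g P - g B'| = |P - B'|`, so `P` lies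
on the perpendicular bisector of `B` and `B'`, which is a line unless `B' = B`. Hence the three
non-collinear measurements force `g B₁ = B₁`; then `B₁` itself satisfies the condition for
`B₂`, and the non-collinear triple `B₁, P₃, P₄` forces `g B₂ = B₂`. A direct isometry fixing two
distinct points is the identity.
-/

open AffineSubspace Module

section PerpBisector

variable {V P : Type*} [NormedAddCommGroup V] [InnerProductSpace ℝ V] [MetricSpace P]
  [NormedAddTorsor V P]

theorem AffineSubspace.collinear_perpBisector [Fact (finrank ℝ V = 2)] {p₁ p₂ : P}
    (h : p₁ ≠ p₂) :
    Collinear ℝ (perpBisector p₁ p₂ : Set P) := by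
  have : FiniteDimensional ℝ V := .of_fact_finrank_eq_succ 1
  rw [collinear_iff_finrank_le_one, ← direction_eq_vectorSpan,
    direction_perpBisector, Submodule.finrank_orthogonal_span_singleton (n := 1)
      (vsub_ne_zero.2 h.symm)]

theorem AffineSubspace.mem_perpBisector_of_dist_map_eq {g : P → P} (hg : Isometry g) {c c' p : P}
    (hc : g c' = c) (h : dist (g p) c = dist p c) : p ∈ perpBisector c c' := by
  rw [mem_perpBisector_iff_dist_eq, ← h, ← hc, hg.dist_eq]

theorem Isometry.map_eq_self_of_dist_map_eq [Fact (finrank ℝ V = 2)] {g : P → P}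
    (hg : Isometry g) (hsurj : Function.Surjective g) {c p q r : P}
    (hpqr : ¬Collinear ℝ ({p, q, r} : Set P)) (hp : dist (g p) c = dist p c)
    (hq : dist (g q) c = dist q c) (hr : dist (g r) c = dist r c) : g c = c := by
  obtain ⟨c', hc'⟩ := hsurj c
  obtain rfl : c = c' := by
    by_contra hne
    refine hpqr ((collinear_perpBisector hne).subset ?_)
    simp only [Set.insert_subset_iff, Set.singleton_subset_iff, SetLike.mem_coe]
    exact ⟨mem_perpBisector_of_dist_map_eq hg hc' hp, mem_perpBisector_of_dist_map_eq hg hc' hq,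
      mem_perpBisector_of_dist_map_eq hg hc' hr⟩
  exact hc'

end PerpBisector

namespace Complex

theorem isometry_mul_add {a : ℂ} (ha : ‖a‖ = 1) (b : ℂ) : Isometry fun z => a * z + b :=
  Isometry.of_dist_eq fun x y => by
    rw [dist_eq, dist_eq, add_sub_add_right_eq_sub, ← mul_sub, norm_mul, ha, one_mul]

theorem surjective_mul_add {a : ℂ} (ha : a ≠ 0) (b : ℂ) :
    Function.Surjective fun z => a * z + b :=
  fun w => ⟨(w - b) / a, by field_simp; ring⟩

theorem mul_add_eq_id_of_fixed {a b c₁ c₂ : ℂ} (hc : c₁ ≠ c₂)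
    (h₁ : a * c₁ + b = c₁) (h₂ : a * c₂ + b = c₂) : (fun z => a * z + b) = id := by
  have ha : a = 1 := by
    have : (a - 1) * (c₁ - c₂) = 0 := by linear_combination h₁ - h₂
    simpa [sub_eq_zero, hc] using this
  subst ha
  have hb : b = 0 := by linear_combination h₁
  funext z
  simp [hb]

end Complex

attribute [local instance] Complex.finrank_real_complex_fact

/-- 3+2 case: three non-collinear points sensed by `B₁` and two points, not aligned
with `B₂`, sensed by `B₂`, force the only compatible direct isometry to be the
identity, i.e. the trajectory is `Ind(1)`. -/
theorem three_plus_two_constructible (B1 B2 : ℂ) (hB : B1 ≠ B2)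
    (P0 P1 P2 : ℂ) (hnc1 : ¬ Collinear ℝ ({P0, P1, P2} : Set ℂ))
    (P3 P4 : ℂ) (hnc2 : ¬ Collinear ℝ ({B1, P3, P4} : Set ℂ))
    (g : ℂ → ℂ) (hg : ∃ a b : ℂ, ‖a‖ = 1 ∧ g = fun z => a * z + b)
    (h0 : ‖g P0 - B1‖ = ‖P0 - B1‖)
    (h1 : ‖g P1 - B1‖ = ‖P1 - B1‖)
    (h2 : ‖g P2 - B1‖ = ‖P2 - B1‖)
    (h3 : ‖g P3 - B2‖ = ‖P3 - B2‖)
    (h4 : ‖g P4 - B2‖ = ‖P4 - B2‖) :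
    g = id := by
  obtain ⟨a, b, ha, rfl⟩ := hg
  simp only [← Complex.dist_eq] at h0 h1 h2 h3 h4
  have hiso := Complex.isometry_mul_add ha b
  have hsurj := Complex.surjective_mul_add (norm_ne_zero_iff.1 (ha ▸ one_ne_zero)) b
  have hB1 := hiso.map_eq_self_of_dist_map_eq hsurj hnc1 h0 h1 h2
  have hB1' : dist (a * B1 + b) B2 = dist B1 B2 := by rw [hB1]
  have hB2 := hiso.map_eq_self_of_dist_map_eq hsurj hnc2 hB1' h3 h4
  exact Complex.mul_add_eq_id_of_fixed hB hB1 hB2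
end

section
/- Let B₁, B₂ ∈ ℝ² be anchors, P_f ∈ ℝ² a final point, P₀, P₁ ∈ ℝ² measurement points with P₀ ≠ B₁, P₁ ≠ B₁ and B₁, P₀, P₁ non-collinear, and P₂ ∈ ℝ² a measurement point with P₂ ≠ B₂. Then the three vectors γ(B₁, P₀, P_f), γ(B₁, P₁, P_f), γ(B₂, P₂, P_f) span ℝ³ if and only if B₁, B₂, P₂ are non-collinear. -/
/-!
Write `u × v` for the planar cross product and `u = P - B`. The third entry of
`‖u‖ • γ(B, P, P_f)` is `u × (P_f - B)`, linear in `u`, so one column operation clears it in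
both rows from `B₁` and turns it into `(B₂ - B₁) × (P₂ - B₁)` in the row from `B₂`. The
determinant is therefore `((P₀ - B₁) × (P₁ - B₁)) ((B₂ - B₁) × (P₂ - B₁)) / (r₀ r₁ r₂)`, and
`(Q - A) × (R - A)` vanishes exactly when `A, Q, R` are collinear.
-/

/-- The rank-one information vector of a single range measurement from anchor `B`
taken at point `P`, for final point `Pf` (plane identified with Euclidean `ℝ²`). -/
noncomputable def gamma (B P Pf : EuclideanSpace ℝ (Fin 2)) : Fin 3 → ℝ :=
  ![(P 0 - B 0) / ‖P - B‖,
    (P 1 - B 1) / ‖P - B‖,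
    ((Pf 0 - P 0) * (B 1 - P 1) - (Pf 1 - P 1) * (B 0 - P 0)) / ‖P - B‖]

theorem Matrix.span_range_eq_top_iff_det_ne_zero {K n : Type*} [Field K] [Fintype n]
    [DecidableEq n] (v : n → n → K) :
    Submodule.span K (Set.range v) = ⊤ ↔ (Matrix.of v).det ≠ 0 := by
  rw [show Set.range v = Set.range (Matrix.of v).row from rfl, ← range_vecMulLinear,
    LinearMap.range_eq_top, Matrix.coe_vecMulLinear, Matrix.vecMul_surjective_iff_isUnit,
    Matrix.isUnit_iff_isUnit_det, isUnit_iff_ne_zero]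

theorem collinear_iff_not_linearIndependent_vsub {k V P : Type*} [DivisionRing k]
    [AddCommGroup V] [Module k V] [AddTorsor V P] (p₁ p₂ p₃ : P) :
    Collinear k {p₁, p₂, p₃} ↔ ¬ LinearIndependent k ![p₂ -ᵥ p₁, p₃ -ᵥ p₁] := by
  rw [collinear_iff_not_affineIndependent_set,
    affineIndependent_iff_linearIndependent_vsub k _ (0 : Fin 3),
    ← linearIndependent_equiv (finSuccAboveEquiv (0 : Fin 3))]
  congr! 2
  ext i
  fin_cases i <;> rfl

def cross (u v : EuclideanSpace ℝ (Fin 2)) : ℝ := u 0 * v 1 - u 1 * v 0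

theorem linearIndependent_pair_iff_cross_ne_zero (u v : EuclideanSpace ℝ (Fin 2)) :
    LinearIndependent ℝ ![u, v] ↔ cross u v ≠ 0 := by
  have hrows := Matrix.linearIndependent_rows_iff_isUnit (A := !![u 0, u 1; v 0, v 1])
  rw [Matrix.isUnit_iff_isUnit_det, isUnit_iff_ne_zero, Matrix.det_fin_two_of] at hrows
  rw [← (EuclideanSpace.equiv (Fin 2) ℝ).toLinearMap.linearIndependent_iff (by simp), cross,
    ← hrows]
  congr! 1
  ext i j
  fin_cases i <;> fin_cases j <;> rfl

theorem collinear_iff_cross_sub_eq_zero (A B C : EuclideanSpace ℝ (Fin 2)) :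
    Collinear ℝ {A, B, C} ↔ cross (B - A) (C - A) = 0 := by
  rw [collinear_iff_not_linearIndependent_vsub, linearIndependent_pair_iff_cross_ne_zero, not_not,
    vsub_eq_sub, vsub_eq_sub]

theorem det_gamma_two_plus_one (B1 B2 Pf P0 P1 P2 : EuclideanSpace ℝ (Fin 2)) :
    (Matrix.of ![gamma B1 P0 Pf, gamma B1 P1 Pf, gamma B2 P2 Pf]).det =
      cross (P0 - B1) (P1 - B1) * cross (B2 - B1) (P2 - B1) /
        (‖P0 - B1‖ * ‖P1 - B1‖ * ‖P2 - B2‖) := by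
  simp only [Matrix.det_fin_three, Matrix.of_apply, gamma, cross, Matrix.cons_val,
    PiLp.sub_apply]
  ring

/-- 2+1 local analysis: the three information vectors span `ℝ³` iff the third
measurement point is not aligned with the two anchors. -/
theorem two_plus_one_span_iff_noncollinear
    (B1 B2 Pf P0 P1 P2 : EuclideanSpace ℝ (Fin 2))
    (h0 : P0 ≠ B1) (h1 : P1 ≠ B1)
    (hnc : ¬ Collinear ℝ ({B1, P0, P1} : Set (EuclideanSpace ℝ (Fin 2))))
    (h2 : P2 ≠ B2) :
    Submodule.span ℝ ({gamma B1 P0 Pf, gamma B1 P1 Pf, gamma B2 P2 Pf} :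
        Set (Fin 3 → ℝ)) = ⊤ ↔
      ¬ Collinear ℝ ({B1, B2, P2} : Set (EuclideanSpace ℝ (Fin 2))) := by
  have hr : ‖P0 - B1‖ * ‖P1 - B1‖ * ‖P2 - B2‖ ≠ 0 := by simp [sub_eq_zero, h0, h1, h2]
  rw [collinear_iff_cross_sub_eq_zero] at hnc ⊢
  rw [← Matrix.range_cons_cons_empty _ _ ![], ← Set.singleton_union, ← Matrix.range_cons,
    Matrix.span_range_eq_top_iff_det_ne_zero, det_gamma_two_plus_one, div_ne_zero_iff,
    and_iff_left hr, mul_ne_zero_iff, and_iff_right hnc]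
end
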